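/- For two locks there is no correct compositional translation of blocking type (P_iP_i, P_jP_j) for any i, j ∈ {1,2} and any initial store. -/

import Mathlib

/-- Symbols of SYNCSIMPLE: `!` (bang) and `?` (ques). -/
inductive SSym | bang | ques
deriving DecidableEq

/-- A SYNCSIMPLE subprocess: a string over {!,?} ending with `0` (false) or `✓` (true). -/
abbrev SSub := List SSym × Bool

/-- A SYNCSIMPLE process: a multiset of subprocesses. -/
abbrev SProc := Multiset SSub

/-- The SYS reduction: a leading `!` and a leading `?` of two subprocesses are consumed. -/
def SysStep (P Q : SProc) : Prop :=
  ∃ (u1 u2 : List SSym) (b1 b2 : Bool) (R : SProc),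
    P = (SSym.bang :: u1, b1) ::ₘ (SSym.ques :: u2, b2) ::ₘ R ∧
    Q = (u1, b1) ::ₘ (u2, b2) ::ₘ R

/-- A process is successful if it contains the subprocess `✓`. -/
def SSuccessful (P : SProc) : Prop := (([], true) : SSub) ∈ P

def SMayConv (P : SProc) : Prop :=
  ∃ Q, Relation.ReflTransGen SysStep P Q ∧ SSuccessful Q

def SMustConv (P : SProc) : Prop :=
  ∀ Q, Relation.ReflTransGen SysStep P Q → SMayConv Q

/-- Lock operations: put `P_i` and take `T_i`. -/
inductive LOp | put | take
deriving DecidableEq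

abbrev LSym (k : ℕ) := LOp × Fin k
abbrev LSub (k : ℕ) := List (LSym k) × Bool
abbrev LProc (k : ℕ) := Multiset (LSub k)
/-- The store of `k` locks: `true` = full (■), `false` = empty (□). -/
abbrev Store (k : ℕ) := Fin k → Bool

/-- LOCKSIMPLE step: `P_i` fills an empty lock `i` (blocks if full);
    `T_i` empties lock `i` and never blocks. -/
def LockStep {k : ℕ} : (LProc k × Store k) → (LProc k × Store k) → Prop :=
  fun s t => ∃ (i : Fin k) (u : List (LSym k)) (b : Bool) (R : LProc k),
    ((s.1 = ((LOp.put, i) :: u, b) ::ₘ R ∧ s.2 i = false ∧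
      t.1 = (u, b) ::ₘ R ∧ t.2 = Function.update s.2 i true) ∨
     (s.1 = ((LOp.take, i) :: u, b) ::ₘ R ∧
      t.1 = (u, b) ::ₘ R ∧ t.2 = Function.update s.2 i false))

def LSuccessful {k : ℕ} (s : LProc k × Store k) : Prop := (([], true) : LSub k) ∈ s.1

def LMayConv {k : ℕ} (s : LProc k × Store k) : Prop :=
  ∃ t, Relation.ReflTransGen LockStep s t ∧ LSuccessful t

def LMustConv {k : ℕ} (s : LProc k × Store k) : Prop :=
  ∀ t, Relation.ReflTransGen LockStep s t → LMayConv t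

/-- The compositional translation determined by the strings `tb = τ(!)` and `tq = τ(?)`,
    applied to a subprocess. -/
def transSub {k : ℕ} (tb tq : List (LSym k)) (u : SSub) : LSub k :=
  (u.1.flatMap (fun c => match c with | SSym.bang => tb | SSym.ques => tq), u.2)

/-- The compositional translation applied to a process. -/
def transProc {k : ℕ} (tb tq : List (LSym k)) (P : SProc) : LProc k :=
  P.map (transSub tb tq)

/-- Correctness of the compositional translation `(tb, tq)` with initial store `IS`:
    may- and must-convergence are preserved and reflected. -/
def Correct {k : ℕ} (IS : Store k) (tb tq : List (LSym k)) : Prop :=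
  ∀ P : SProc,
    (SMayConv P ↔ LMayConv (transProc tb tq P, IS)) ∧
    (SMustConv P ↔ LMustConv (transProc tb tq P, IS))

/-- The solo execution of the string `s` from store `IS` reaches the point where
    `(put, i) :: rest` remains and deadlocks there since lock `i` is full. -/
def SoloBlocked {k : ℕ} (IS : Store k) (s : List (LSym k)) (i : Fin k)
    (rest : List (LSym k)) : Prop :=
  ∃ C : Store k,
    Relation.ReflTransGen LockStep (({(s, false)} : LProc k), IS)
      (({((LOp.put, i) :: rest, false)} : LProc k), C) ∧
    C i = true

/-- Blocking type `P_i`: the blocking prefix is `R P_i` with `R` free of `P_i, T_i`. -/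
def BlockingTypeP {k : ℕ} (IS : Store k) (s : List (LSym k)) (i : Fin k) : Prop :=
  ∃ r rest, s = r ++ (LOp.put, i) :: rest ∧ (∀ x ∈ r, x.2 ≠ i) ∧
    SoloBlocked IS s i rest

/-- Blocking type `P_i P_i`: the blocking prefix is `R₁ P_i R₂ P_i` with
    `R₂` free of `P_i, T_i`, deadlocking exactly before the last `P_i`. -/
def BlockingTypePP {k : ℕ} (IS : Store k) (s : List (LSym k)) (i : Fin k) : Prop :=
  ∃ r1 r2 rest, s = r1 ++ (LOp.put, i) :: r2 ++ (LOp.put, i) :: rest ∧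
    (∀ x ∈ r2, x.2 ≠ i) ∧ SoloBlocked IS s i rest


/-!
Run `tb = τ(!)` alone from `IS` until it blocks before its second `P_i`, then a copy of
`tq = τ(?)`; a string of blocking type `P_jP_j` never finishes alone, so this copy blocks too. If
lock `i` is still full, both are stuck. Otherwise the copy waits at `P_o` on the other lock `o`.
If every solo run of `tq` from a store with `o` empty ends with `o` full, the `tb` copy can be
resumed again and again, each time followed by a fresh copy of `tq` that refills `o`, until every
process waits on a full lock or `tb` has finished. Marking the `tq` copies successful, this
deadlock contradicts must-convergence of `!·0 | ?·✓ | … | ?·✓`. In the remaining case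
`j = i`, and the solo runs from `IS` leave lock `o` full after `tb` but empty after `tq`;
exchanging the roles of `tb` and `tq` gives the opposite, a contradiction.
-/

open Relation

namespace LOp

def written : LOp → Bool
  | put => true
  | take => false

end LOp

section SoloRun

variable {k : ℕ}

/-- Solo execution of a string from a store, up to termination or the first blocking `P_x`. -/
def soloRun : List (LSym k) → Store k → List (LSym k) × Store k
  | [], S => ([], S)
  | a :: u, S =>
    if a.1 = LOp.put ∧ S a.2 = true then (a :: u, S)
    else soloRun u (Function.update S a.2 a.1.written)

def applyOps (u : List (LSym k)) (S : Store k) : Store k :=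
  u.foldl (fun S a => Function.update S a.2 a.1.written) S

def firstOn (x : Fin k) (u : List (LSym k)) : Option LOp :=
  (u.find? (·.2 = x)).map Prod.fst

def lastOn (x : Fin k) (u : List (LSym k)) : Option LOp :=
  firstOn x u.reverse

lemma soloRun_cons (a : LSym k) (u : List (LSym k)) (S : Store k) :
    soloRun (a :: u) S =
      if a.1 = LOp.put ∧ S a.2 = true then (a :: u, S)
      else soloRun u (Function.update S a.2 a.1.written) := rfl

lemma soloRun_put_cons_of_full {x : Fin k} {S : Store k} (h : S x = true) (v : List (LSym k)) :
    soloRun ((LOp.put, x) :: v) S = ((LOp.put, x) :: v, S) := by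
  simp [soloRun_cons, h]

lemma soloRun_put_cons_of_empty {x : Fin k} {S : Store k} (h : S x = false) (v : List (LSym k)) :
    soloRun ((LOp.put, x) :: v) S = soloRun v (Function.update S x true) := by
  simp [soloRun_cons, h, LOp.written]

@[simp]
lemma firstOn_nil (x : Fin k) : firstOn x ([] : List (LSym k)) = none := rfl

@[simp]
lemma firstOn_cons (x : Fin k) (a : LSym k) (u : List (LSym k)) :
    firstOn x (a :: u) = if a.2 = x then some a.1 else firstOn x u := by
  by_cases h : a.2 = x <;> simp [firstOn, h]

lemma firstOn_eq_none_iff {x : Fin k} {u : List (LSym k)} :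
    firstOn x u = none ↔ ∀ a ∈ u, a.2 ≠ x := by
  simp [firstOn, List.find?_eq_none]

lemma firstOn_append (x : Fin k) (u v : List (LSym k)) :
    firstOn x (u ++ v) = (firstOn x u).or (firstOn x v) := by
  induction u with
  | nil => simp
  | cons a u ih => by_cases ha : a.2 = x <;> simp [ha, ih]

lemma lastOn_eq_none_iff {x : Fin k} {u : List (LSym k)} :
    lastOn x u = none ↔ firstOn x u = none := by
  simp [lastOn, firstOn_eq_none_iff]

lemma lastOn_append_cons {x : Fin k} {v : List (LSym k)} (hv : ∀ a ∈ v, a.2 ≠ x)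
    (u : List (LSym k)) (op : LOp) : lastOn x (u ++ (op, x) :: v) = some op := by
  have : firstOn x v.reverse = none := firstOn_eq_none_iff.2 (by simpa using hv)
  simp [lastOn, firstOn_append, this]

lemma applyOps_apply (u : List (LSym k)) (S : Store k) (x : Fin k) :
    applyOps u S x = ((lastOn x u).map LOp.written).getD (S x) := by
  induction u using List.reverseRecOn with
  | nil => rfl
  | append_singleton u a ih =>
    by_cases ha : a.2 = x
    · subst ha; simp [applyOps, lastOn]
    · simp [applyOps, lastOn, ha, Function.update_of_ne (Ne.symm ha)] at ih ⊢
      exact ih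

lemma applyOps_apply_of_lastOn {x : Fin k} {u : List (LSym k)} {op : LOp}
    (h : lastOn x u = some op) (S : Store k) : applyOps u S x = op.written := by
  simp [applyOps_apply, h]

lemma soloRun_length_le (u : List (LSym k)) (S : Store k) :
    (soloRun u S).1.length ≤ u.length := by
  induction u generalizing S with
  | nil => exact le_rfl
  | cons a u ih =>
    rw [soloRun_cons]
    split_ifs
    · exact le_rfl
    · exact (ih _).trans (Nat.le_succ _)

lemma soloRun_blocked {u r : List (LSym k)} {S T : Store k} (h : soloRun u S = (r, T)) :
    r = [] ∨ ∃ x v, r = (LOp.put, x) :: v ∧ T x = true := by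
  induction u generalizing S with
  | nil => cases h; exact .inl rfl
  | cons a u ih =>
    rw [soloRun_cons] at h
    split_ifs at h with ha
    · cases h; exact .inr ⟨a.2, u, by rw [← ha.1], ha.2⟩
    · exact ih h

lemma soloRun_append_of_fst_eq_nil {u : List (LSym k)} {S : Store k} (h : (soloRun u S).1 = [])
    (v : List (LSym k)) : soloRun (u ++ v) S = soloRun v (applyOps u S) := by
  induction u generalizing S with
  | nil => rfl
  | cons a u ih =>
    rw [soloRun_cons] at h
    rw [List.cons_append, soloRun_cons]
    split_ifs at h ⊢
    exact ih h

lemma soloRun_append_of_fst_ne_nil {u : List (LSym k)} {S : Store k} (h : (soloRun u S).1 ≠ [])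
    (v : List (LSym k)) : soloRun (u ++ v) S = ((soloRun u S).1 ++ v, (soloRun u S).2) := by
  induction u generalizing S with
  | nil => exact absurd rfl h
  | cons a u ih =>
    rw [soloRun_cons] at h ⊢
    rw [List.cons_append, soloRun_cons]
    split_ifs at h ⊢
    · rfl
    · exact ih h

lemma soloRun_fst_congr {u : List (LSym k)} {S S' : Store k}
    (h : ∀ x, firstOn x u = some LOp.put → S' x = S x) :
    (soloRun u S').1 = (soloRun u S).1 := by
  induction u generalizing S S' with
  | nil => rfl
  | cons a u ih =>
    obtain ⟨op, y⟩ := a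
    have hupd : ∀ x, firstOn x u = some LOp.put →
        Function.update S' y op.written x = Function.update S y op.written x := by
      intro x hx
      by_cases hxy : x = y
      · subst hxy; simp
      · simp only [Function.update_of_ne hxy]
        exact h x (by simpa [Ne.symm hxy] using hx)
    cases op with
    | take => simpa [soloRun_cons] using ih hupd
    | put =>
      have hy : S' y = S y := h y (by simp)
      simp only [soloRun_cons, hy]
      split_ifs
      · rfl
      · exact ih hupd

lemma soloRun_of_firstOn_eq_put {x : Fin k} {u : List (LSym k)} {S : Store k}
    (hu : firstOn x u = some LOp.put) (hS : S x = true) :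
    (soloRun u S).1 ≠ [] ∧ (soloRun u S).2 x = true := by
  induction u generalizing S with
  | nil => simp at hu
  | cons a u ih =>
    obtain ⟨op, y⟩ := a
    by_cases hyx : y = x
    · subst hyx
      obtain rfl : op = LOp.put := by simpa using hu
      simp [soloRun_cons, hS]
    · rw [firstOn_cons, if_neg hyx] at hu
      rw [soloRun_cons]
      split_ifs with hb
      · exact ⟨by simp, hS⟩
      · exact ih hu (by rwa [Function.update_of_ne (Ne.symm hyx)])

lemma soloRun_append_of_firstOn {u : List (LSym k)} {S S' : Store k} (hu : (soloRun u S).1 = [])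
    (h : ∀ x, firstOn x u = some LOp.put → S' x = false) (v : List (LSym k)) :
    soloRun (u ++ v) S' = soloRun v (applyOps u S') := by
  refine soloRun_append_of_fst_eq_nil ?_ v
  rw [← hu]
  refine soloRun_fst_congr fun x hx => ?_
  rw [h x hx, eq_comm, Bool.eq_false_iff]
  exact fun hS => (soloRun_of_firstOn_eq_put hx hS).1 hu

lemma soloRun_append_put_fst_ne_nil {i : Fin k} {p : List (LSym k)}
    (hp : lastOn i p = some LOp.put) (w : List (LSym k)) (S : Store k) :
    (soloRun (p ++ (LOp.put, i) :: w) S).1 ≠ [] := by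
  by_cases h : (soloRun p S).1 = []
  · rw [soloRun_append_of_fst_eq_nil h,
      soloRun_put_cons_of_full (applyOps_apply_of_lastOn hp S)]
    simp
  · simp [soloRun_append_of_fst_ne_nil h]

def Refills (u : List (LSym k)) (o : Fin k) : Prop :=
  ∀ S : Store k, S o = false → (soloRun u S).2 o = true

end SoloRun

section LockStep

variable {k : ℕ}

lemma lockStep_cons {a : LSym k} {S : Store k} (ha : ¬(a.1 = LOp.put ∧ S a.2 = true))
    (u : List (LSym k)) (b : Bool) (R : LProc k) :
    LockStep ((a :: u, b) ::ₘ R, S) ((u, b) ::ₘ R, Function.update S a.2 a.1.written) := by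
  obtain ⟨op, x⟩ := a
  cases op with
  | put => exact ⟨x, u, b, R, Or.inl ⟨rfl, by simpa using ha, rfl, rfl⟩⟩
  | take => exact ⟨x, u, b, R, Or.inr ⟨rfl, rfl, rfl⟩⟩

lemma reflTransGen_soloRun {u w : List (LSym k)} {S T : Store k} (h : soloRun u S = (w, T))
    (b : Bool) (R : LProc k) : ReflTransGen LockStep ((u, b) ::ₘ R, S) ((w, b) ::ₘ R, T) := by
  induction u generalizing S with
  | nil => cases h; exact .refl
  | cons a u ih =>
    rw [soloRun_cons] at h
    split_ifs at h with ha
    · cases h; exact .refl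
    · exact .head (lockStep_cons ha u b R) (ih h)

lemma exists_of_lockStep_singleton {u : List (LSym k)} {b : Bool} {S : Store k}
    {t : LProc k × Store k} (h : LockStep (({(u, b)} : LProc k), S) t) :
    ∃ u', t.1 = {(u', b)} ∧ soloRun u S = soloRun u' t.2 := by
  obtain ⟨x, u', b', R, ⟨h1, hx, h2, h3⟩ | ⟨h1, h2, h3⟩⟩ := h <;>
    obtain ⟨⟨rfl, rfl⟩, rfl⟩ := by simpa using (Multiset.singleton_eq_cons_iff _).1 h1
  · exact ⟨u', by simpa using h2, by simp [soloRun_put_cons_of_empty hx, h3]⟩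
  · exact ⟨u', by simpa using h2, by simp [soloRun_cons, h3, LOp.written]⟩

lemma exists_of_reflTransGen_singleton {u : List (LSym k)} {b : Bool} {S : Store k}
    {t : LProc k × Store k} (h : ReflTransGen LockStep (({(u, b)} : LProc k), S) t) :
    ∃ u', t.1 = {(u', b)} ∧ soloRun u S = soloRun u' t.2 := by
  induction h with
  | refl => exact ⟨u, rfl, rfl⟩
  | @tail c _ _ hstep ih =>
    obtain ⟨u', h1, h2⟩ := ih
    obtain ⟨Q, C⟩ := c
    obtain rfl : Q = {(u', b)} := h1
    obtain ⟨u'', h1', h2'⟩ := exists_of_lockStep_singleton hstep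
    exact ⟨u'', h1', h2.trans h2'⟩

lemma SoloBlocked.soloRun_eq {IS : Store k} {s : List (LSym k)} {i : Fin k} {rest : List (LSym k)}
    (h : SoloBlocked IS s i rest) :
    ∃ C, soloRun s IS = ((LOp.put, i) :: rest, C) ∧ C i = true := by
  obtain ⟨C, hr, hC⟩ := h
  obtain ⟨u', h1, h2⟩ := exists_of_reflTransGen_singleton hr
  obtain rfl : (LOp.put, i) :: rest = u' := by simpa using h1
  exact ⟨C, by rw [h2, soloRun_put_cons_of_full hC], hC⟩

lemma BlockingTypePP.exists_split {IS : Store k} {s : List (LSym k)} {i : Fin k}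
    (h : BlockingTypePP IS s i) :
    ∃ p w, s = p ++ (LOp.put, i) :: w ∧ lastOn i p = some LOp.put ∧
      (soloRun p IS).1 = [] := by
  obtain ⟨r1, r2, rest, rfl, hr2, hsolo⟩ := h
  refine ⟨_, rest, rfl, lastOn_append_cons hr2 r1 LOp.put, ?_⟩
  obtain ⟨C, hC, -⟩ := hsolo.soloRun_eq
  by_contra hne
  rw [soloRun_append_of_fst_ne_nil hne] at hC
  exact hne (List.append_left_eq_self.1 (congrArg Prod.fst hC))

def Deadlocked (s : LProc k × Store k) : Prop :=
  ∀ p ∈ s.1, p = ([], false) ∨ ∃ x v, p.1 = (LOp.put, x) :: v ∧ s.2 x = true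

def WaitingAt (o : Fin k) (Qs : LProc k) : Prop :=
  ∀ p ∈ Qs, ∃ v, p = ((LOp.put, o) :: v, true)

lemma WaitingAt.waits {o : Fin k} {Qs : LProc k} (h : WaitingAt o Qs) {T : Store k}
    (hT : T o = true) :
    ∀ p ∈ Qs, p = ([], false) ∨ ∃ x v, p.1 = (LOp.put, x) :: v ∧ T x = true := by
  intro p hp
  obtain ⟨v, rfl⟩ := h p hp
  exact .inr ⟨o, v, rfl, hT⟩

lemma Deadlocked.not_lockStep {s t : LProc k × Store k} (hs : Deadlocked s) : ¬LockStep s t := by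
  obtain ⟨Q, S⟩ := s
  rintro ⟨x, u, b, R, ⟨rfl, hx, -⟩ | ⟨rfl, -⟩⟩ <;>
    rcases hs _ (Multiset.mem_cons_self _ _) with h | ⟨y, v, h, hy⟩ <;> simp_all

lemma Deadlocked.not_lMayConv {s : LProc k × Store k} (hs : Deadlocked s) : ¬LMayConv s := by
  rintro ⟨t, hr, ht⟩
  obtain rfl : t = s := by
    rcases hr.cases_head with rfl | ⟨c, hc, -⟩
    · rfl
    · exact absurd hc hs.not_lockStep
  rcases hs _ ht with h | ⟨y, v, h, -⟩ <;> simp at h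

end LockStep

section Convergence

open Multiset

lemma SysStep.success_mem {P Q : SProc} (h : SysStep P Q) (hP : (([], true) : SSub) ∈ P) :
    (([], true) : SSub) ∈ Q := by
  obtain ⟨u1, u2, b1, b2, R, rfl, rfl⟩ := h
  simp_all

lemma SysStep.nil_mem_of_replicate {n m : ℕ} {fb fq : Bool} {Q : SProc}
    (h : SysStep (replicate n ([SSym.bang], fb) + replicate m ([SSym.ques], fq)) Q) :
    (([], fb) : SSub) ∈ Q ∧ (([], fq) : SSub) ∈ Q := by
  obtain ⟨u1, u2, b1, b2, R, hP, rfl⟩ := h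
  have h1 : (SSym.bang :: u1, b1) ∈ (SSym.bang :: u1, b1) ::ₘ (SSym.ques :: u2, b2) ::ₘ R := by
    simp
  have h2 : (SSym.ques :: u2, b2) ∈ (SSym.bang :: u1, b1) ::ₘ (SSym.ques :: u2, b2) ::ₘ R := by
    simp
  rw [← hP] at h1 h2
  simp [mem_replicate] at h1 h2
  simp [h1, h2]

lemma sMustConv_replicate {n m : ℕ} (hn : n ≠ 0) (hm : m ≠ 0) {fb fq : Bool}
    (hf : fb = true ∨ fq = true) :
    SMustConv (replicate n ([SSym.bang], fb) + replicate m ([SSym.ques], fq)) := by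
  set P := replicate n (([SSym.bang], fb) : SSub) + replicate m ([SSym.ques], fq)
  have hsucc : ∀ Q, SysStep P Q → SSuccessful Q := fun Q hQ => by
    obtain ⟨h1, h2⟩ := hQ.nil_mem_of_replicate
    rcases hf with rfl | rfl
    exacts [h1, h2]
  have hreach : ∀ Q, ReflTransGen SysStep P Q → Q = P ∨ SSuccessful Q := by
    intro Q hQ
    induction hQ with
    | refl => exact .inl rfl
    | tail _ hstep ih =>
      rcases ih with rfl | h
      exacts [.inr (hsucc _ hstep), .inr (hstep.success_mem h)]
  intro Q hQ
  rcases hreach Q hQ with rfl | h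
  · obtain ⟨n, rfl⟩ := Nat.exists_eq_succ_of_ne_zero hn
    obtain ⟨m, rfl⟩ := Nat.exists_eq_succ_of_ne_zero hm
    have hstep : SysStep P (([], fb) ::ₘ ([], fq) ::ₘ (replicate n ([SSym.bang], fb) +
        replicate m ([SSym.ques], fq))) :=
      ⟨[], [], fb, fq, _, by simp [P, replicate_succ, add_cons, cons_swap], rfl⟩
    exact ⟨_, .single hstep, hsucc _ hstep⟩
  · exact ⟨Q, .refl, h⟩

lemma transProc_replicate {k : ℕ} (tb tq : List (LSym k)) (n m : ℕ) (fb fq : Bool) :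
    transProc tb tq (replicate n ([SSym.bang], fb) + replicate m ([SSym.ques], fq)) =
      replicate n (tb, fb) + replicate m (tq, fq) := by
  simp [transProc, transSub, map_replicate]

lemma Correct.not_deadlocked {k : ℕ} {IS : Store k} {tb tq : List (LSym k)}
    (hC : Correct IS tb tq) {n m : ℕ} (hn : n ≠ 0) (hm : m ≠ 0) {fb fq : Bool}
    (hf : fb = true ∨ fq = true) {t : LProc k × Store k}
    (ht : ReflTransGen LockStep (replicate n (tb, fb) + replicate m (tq, fq), IS) t) :
    ¬Deadlocked t := fun hd => by
  have hmust := (hC _).2.1 (sMustConv_replicate hn hm hf)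
  rw [transProc_replicate] at hmust
  exact hd.not_lMayConv (hmust t ht)

end Convergence

section TwoLocks

open Multiset

/-- Resume the `P_i` process; unless that deadlocks, let a fresh copy of `tq` refill `o`. -/
lemma exists_deadlock_or_round {tq : List (LSym 2)} {i o : Fin 2} (hoi : o ≠ i)
    (hnf : ∀ S, (soloRun tq S).1 ≠ []) (hfill : Refills tq o)
    {ut : List (LSym 2)} {Qs : LProc 2} {S : Store 2} (hQs : WaitingAt o Qs) (hS : S i = false) :
    (∃ M t, ReflTransGen LockStep
      (((LOp.put, i) :: ut, false) ::ₘ (Qs + replicate M (tq, true)), S) t ∧ Deadlocked t) ∨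
    ∃ v Qs' D, v.length < ut.length ∧ WaitingAt o Qs' ∧ D i = false ∧
      ∀ M, ReflTransGen LockStep
        (((LOp.put, i) :: ut, false) ::ₘ (Qs + replicate (M + 1) (tq, true)), S)
        (((LOp.put, i) :: v, false) ::ₘ (Qs' + replicate M (tq, true)), D) := by
  obtain ⟨⟨r, C⟩, hrun⟩ : ∃ rC, soloRun ut (Function.update S i true) = rC := ⟨_, rfl⟩
  have hresume := reflTransGen_soloRun ((soloRun_put_cons_of_empty hS ut).trans hrun) false
  have hlen : r.length ≤ ut.length := by
    have := soloRun_length_le ut (Function.update S i true)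
    rwa [hrun] at this
  by_cases hCo : C o = true
  · refine .inl ⟨0, _, hresume _, ?_⟩
    simp only [Deadlocked, forall_mem_cons, replicate_zero, add_zero]
    exact ⟨by simpa using soloRun_blocked hrun, hQs.waits hCo⟩
  obtain ⟨⟨q, D⟩, hqrun⟩ : ∃ qD, soloRun tq C = qD := ⟨_, rfl⟩
  have hDo : D o = true := by simpa [hqrun] using hfill C (by simpa using hCo)
  obtain ⟨x, w, rfl, hDx⟩ := (soloRun_blocked hqrun).resolve_left (by simpa [hqrun] using hnf C)
  have hdeploy : ∀ M, ReflTransGen LockStep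
      (((LOp.put, i) :: ut, false) ::ₘ (Qs + replicate (M + 1) (tq, true)), S)
      (((LOp.put, x) :: w, true) ::ₘ (r, false) ::ₘ (Qs + replicate M (tq, true)), D) := by
    intro M
    refine (hresume _).trans ?_
    rw [replicate_succ, add_cons, cons_swap]
    exact reflTransGen_soloRun hqrun true _
  by_cases hrD : r = [] ∨ ∃ z v, r = (LOp.put, z) :: v ∧ D z = true
  · refine .inl ⟨1, _, hdeploy 0, ?_⟩
    simp only [Deadlocked, forall_mem_cons, replicate_zero, add_zero]
    exact ⟨.inr ⟨x, w, rfl, hDx⟩, by simpa using hrD, hQs.waits hDo⟩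
  obtain ⟨z, v, rfl, hCz⟩ := (soloRun_blocked hrun).resolve_left fun h => hrD (.inl h)
  obtain rfl : z = i := by
    by_contra hzi
    exact hCo (by rwa [show z = o by omega] at hCz)
  have hDz : D z = false := by simpa using fun h => hrD (.inr ⟨z, v, rfl, h⟩)
  obtain rfl : x = o := by
    by_contra hxo
    rw [show x = z by omega, hDz] at hDx
    exact Bool.false_ne_true hDx
  refine .inr ⟨v, ((LOp.put, x) :: w, true) ::ₘ Qs, D, by simpa using hlen, ?_, hDz,
    fun M => ?_⟩
  · simpa [WaitingAt] using hQs
  · rw [cons_add, cons_swap]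
    exact hdeploy M

theorem exists_deadlock_of_waitingAt {tq : List (LSym 2)} {i o : Fin 2} (hoi : o ≠ i)
    (hnf : ∀ S, (soloRun tq S).1 ≠ []) (hfill : Refills tq o)
    (ut : List (LSym 2)) (Qs : LProc 2) (S : Store 2) (hQs : WaitingAt o Qs) (hS : S i = false) :
    ∃ M t, ReflTransGen LockStep
      (((LOp.put, i) :: ut, false) ::ₘ (Qs + replicate M (tq, true)), S) t ∧ Deadlocked t := by
  rcases exists_deadlock_or_round hoi hnf hfill hQs hS with
    h | ⟨v, Qs', D, hlen, hQs', hD, hround⟩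
  · exact h
  obtain ⟨M, t, ht, hd⟩ := exists_deadlock_of_waitingAt hoi hnf hfill v Qs' D hQs' hD
  exact ⟨M + 1, t, (hround M).trans ht, hd⟩
termination_by ut.length

lemma refills_or_of_soloRun_snd_eq_false {IS A : Store 2} {pq wq tq : List (LSym 2)} {i j o : Fin 2}
    (hoi : o ≠ i) (htq : tq = pq ++ (LOp.put, j) :: wq) (hlq : lastOn j pq = some LOp.put)
    (hpq : (soloRun pq IS).1 = []) (hAi : A i = true) (hBi : (soloRun tq A).2 i = false) :
    Refills tq o ∨ (j = i ∧ (soloRun tq IS).2 o = false ∧ A o = true) := by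
  -- a first operation `P_i` in `pq` would keep lock `i` full in the run from `A`
  have hfirst : ∀ x, firstOn x pq = some LOp.put → x = o := by
    intro x hx
    by_contra hxo
    obtain rfl : x = i := by omega
    have hx' : firstOn x tq = some LOp.put := by rw [htq, firstOn_append, hx]; rfl
    have := (soloRun_of_firstOn_eq_put hx' hAi).2
    simp [hBi] at this
  have hrun : ∀ S : Store 2, (firstOn o pq = some LOp.put → S o = false) →
      soloRun tq S = ((LOp.put, j) :: wq, applyOps pq S) := by
    intro S hS
    rw [htq, soloRun_append_of_firstOn hpq (fun x hx => by obtain rfl := hfirst x hx; exact hS hx),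
      soloRun_put_cons_of_full (applyOps_apply_of_lastOn hlq S)]
  have hjo : j = o ∨ firstOn o pq = some LOp.put ∧ A o = true := by
    refine or_iff_not_imp_right.2 fun h => ?_
    by_contra hjo
    obtain rfl : j = i := by omega
    rw [hrun A fun hf => by simpa using fun hA => h ⟨hf, hA⟩] at hBi
    simp [applyOps_apply_of_lastOn hlq, LOp.written] at hBi
  cases hlo : lastOn o pq with
  | none =>
    rcases hjo with rfl | ⟨h, -⟩
    · simp [hlo] at hlq
    · simp [lastOn_eq_none_iff.1 hlo] at h
  | some op =>
    cases op with
    | put =>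
      left
      intro S hS
      rw [hrun S fun _ => hS]
      exact applyOps_apply_of_lastOn hlo S
    | take =>
      right
      have hjo' : j ≠ o := by rintro rfl; simp [hlq] at hlo
      refine ⟨by omega, ?_, (hjo.resolve_left hjo').2⟩
      rw [htq, soloRun_append_of_fst_eq_nil hpq,
        soloRun_put_cons_of_full (applyOps_apply_of_lastOn hlq IS)]
      exact applyOps_apply_of_lastOn hlo IS

theorem exists_deadlock_or {IS : Store 2} {tb tq : List (LSym 2)} {i j o : Fin 2} (hoi : o ≠ i)
    (hb : BlockingTypePP IS tb i) (hq : BlockingTypePP IS tq j) :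
    (∃ m, m ≠ 0 ∧ ∃ t,
      ReflTransGen LockStep ((tb, false) ::ₘ replicate m (tq, true), IS) t ∧ Deadlocked t) ∨
      (j = i ∧ (soloRun tq IS).2 o = false ∧ (soloRun tb IS).2 o = true) := by
  obtain ⟨-, -, wb, -, -, hsolo⟩ := hb
  obtain ⟨A, hA, hAi⟩ := hsolo.soloRun_eq
  obtain ⟨pq, wq, htq, hlq, hpq⟩ := hq.exists_split
  have hnf : ∀ S, (soloRun tq S).1 ≠ [] := htq ▸ soloRun_append_put_fst_ne_nil hlq wq
  obtain ⟨⟨q, B⟩, hqrun⟩ : ∃ qB, soloRun tq A = qB := ⟨_, rfl⟩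
  obtain ⟨y, v, rfl, hBy⟩ := (soloRun_blocked hqrun).resolve_left (by simpa [hqrun] using hnf A)
  have hstart : ∀ R, ReflTransGen LockStep ((tb, false) ::ₘ (tq, true) ::ₘ R, IS)
      (((LOp.put, i) :: wb, false) ::ₘ ((LOp.put, y) :: v, true) ::ₘ R, B) := by
    intro R
    refine (reflTransGen_soloRun hA false _).trans ?_
    rw [cons_swap, cons_swap ((LOp.put, i) :: wb, false)]
    exact reflTransGen_soloRun hqrun true _
  by_cases hBi : B i = true
  · left
    refine ⟨1, one_ne_zero, _, hstart 0, ?_⟩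
    simp only [Deadlocked, forall_mem_cons]
    exact ⟨.inr ⟨i, wb, rfl, hBi⟩, .inr ⟨y, v, rfl, hBy⟩, by simp⟩
  obtain rfl : y = o := by
    by_contra hyo
    exact hBi (by rwa [show y = i by omega] at hBy)
  rw [hA]
  rcases refills_or_of_soloRun_snd_eq_false hoi htq hlq hpq hAi (by simpa [hqrun] using hBi)
    with hfill | hleaf
  · left
    obtain ⟨M, t, ht, hd⟩ := exists_deadlock_of_waitingAt hoi hnf hfill wb
      {((LOp.put, y) :: v, true)} B (by simp [WaitingAt]) (by simpa using hBi)
    refine ⟨M + 1, M.succ_ne_zero, t, ?_, hd⟩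
    rw [replicate_succ]
    exact (hstart _).trans (by simpa [singleton_add] using ht)
  · exact .inr hleaf

end TwoLocks

/-- for two locks there is no correct compositional translation of
blocking type `(P_iP_i, P_jP_j)` for any `i, j` and any initial store. -/
theorem no_blocking_type_PP_PP :
    ∀ (IS : Store 2) (tb tq : List (LSym 2)) (i j : Fin 2),
      Correct IS tb tq →
      BlockingTypePP IS tb i → BlockingTypePP IS tq j → False := by
  intro IS tb tq i j hC hb hq
  have hoi : i + 1 ≠ i := by omega
  rcases exists_deadlock_or hoi hb hq with ⟨m, hm, t, ht, hd⟩ | ⟨rfl, -, hb_o⟩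
  · exact hC.not_deadlocked one_ne_zero hm (.inr rfl)
      (by rwa [Multiset.replicate_one, Multiset.singleton_add]) hd
  rcases exists_deadlock_or hoi hq hb with ⟨m, hm, t, ht, hd⟩ | ⟨-, hb_o', -⟩
  · exact hC.not_deadlocked hm one_ne_zero (fq := false) (.inl rfl)
      (by rwa [add_comm, Multiset.replicate_one, Multiset.singleton_add]) hd
  simp [hb_o] at hb_o'
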